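/- arXiv:1809.03425 — 3 statements merged into one kernel-verified Lean document; each statement's English description precedes it below -/
import Mathlib

section
/- Let E₁, …, E_m be finite nonempty types, E = ∏_{i=1}^m E_i, and fix a component index i. Let (P_{t,s})_{0≤t≤s} be a family of real E×E matrices, and fix t ≥ 0 such that the entrywise limit Λ_t := lim_{h→0⁺} (P_{t,t+h} − I)/h exists. Suppose the family satisfies condition (Pi): for all 0 ≤ u ≤ s, all x, x̂ ∈ E with x_i = x̂_i, and all b ∈ E_i with b ≠ x_i, Σ_{y : y_i = b} P_{u,s}(x,y) = Σ_{y : y_i = b} P_{u,s}(x̂,y). Then Λ_t satisfies condition (Mi): for all x, x̂ ∈ E with x_i = x̂_i and all b ∈ E_i with b ≠ x_i, Σ_{y : y_i = b} Λ_t(x,y) = Σ_{y : y_i = b} Λ_t(x̂,y). -/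
open Filter Topology

/-- If a family of matrices `P_{u,s}` on a finite product state space
satisfies condition (Pi) for component `i`, and the entrywise limit
`Λ_t = lim_{h→0⁺} (P_{t,t+h} − I)/h` exists, then `Λ_t` satisfies condition (Mi). -/
theorem condP_implies_condM {m : ℕ} (K : Fin m → Type*)
    [∀ j, Fintype (K j)] [∀ j, Nonempty (K j)] [∀ j, DecidableEq (K j)]
    (i : Fin m)
    (P : ℝ → ℝ → Matrix (∀ j, K j) (∀ j, K j) ℝ)
    (t : ℝ) (ht : 0 ≤ t)
    (Λ : Matrix (∀ j, K j) (∀ j, K j) ℝ)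
    (hlim : ∀ x y : (∀ j, K j), Tendsto
      (fun h : ℝ => (P t (t + h) - 1) x y / h) (𝓝[>] 0) (𝓝 (Λ x y)))
    (hPi : ∀ u s : ℝ, 0 ≤ u → u ≤ s → ∀ x x' : (∀ j, K j), x i = x' i →
      ∀ b : K i, b ≠ x i →
        ∑ y ∈ Finset.univ.filter (fun y : (∀ j, K j) => y i = b), P u s x y =
          ∑ y ∈ Finset.univ.filter (fun y : (∀ j, K j) => y i = b), P u s x' y) :
    ∀ x x' : (∀ j, K j), x i = x' i → ∀ b : K i, b ≠ x i →
      ∑ y ∈ Finset.univ.filter (fun y : (∀ j, K j) => y i = b), Λ x y =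
        ∑ y ∈ Finset.univ.filter (fun y : (∀ j, K j) => y i = b), Λ x' y := by
  intro x x' hxx b hb
  have key : ∀ z : (∀ j, K j), z i = x i → Tendsto
      (fun h : ℝ => (∑ y ∈ Finset.univ.filter (fun y : (∀ j, K j) => y i = b), P t (t + h) z y) / h)
      (𝓝[>] 0) (𝓝 (∑ y ∈ Finset.univ.filter (fun y : (∀ j, K j) => y i = b), Λ z y)) := by
    intro z hz
    have h1 : Tendsto (fun h : ℝ => ∑ y ∈ Finset.univ.filter (fun y : (∀ j, K j) => y i = b),
        (P t (t + h) - 1) z y / h) (𝓝[>] 0)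
        (𝓝 (∑ y ∈ Finset.univ.filter (fun y : (∀ j, K j) => y i = b), Λ z y)) :=
      tendsto_finset_sum _ (fun y _ => hlim z y)
    refine h1.congr (fun h => ?_)
    rw [← Finset.sum_div]
    congr 1
    refine Finset.sum_congr rfl (fun y hy => ?_)
    simp only [Finset.mem_filter] at hy
    have hzy : z ≠ y := fun e => hb (by rw [← hy.2, ← e, hz])
    simp [Matrix.sub_apply, Matrix.one_apply, hzy]
  have hx := key x rfl
  have hx' := key x' hxx.symm
  refine tendsto_nhds_unique ?_ hx'
  refine hx.congr' ?_
  filter_upwards [self_mem_nhdsWithin] with h hh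
  rw [hPi t (t + h) ht (by linarith [hh.out]) x x' hxx b hb]
end

section
/- Let a, c, d : ℝ → ℝ be continuous functions. Index ℝ⁴ by the four states (0,0), (0,1), (1,0), (1,1) and let Λ : ℝ → Matrix (four states) (four states) ℝ have rows: state (0,0): (−(a(u)+c(u)), a(u), 0, c(u)); state (0,1): (0, −d(u), 0, d(u)); state (1,0): (0, 0, −(a(u)+c(u)), a(u)+c(u)); state (1,1): (0, 0, 0, 0). Fix t₀ ≥ 0 and suppose p : ℝ → (four states → ℝ) satisfies p(t₀) = the indicator of state (0,0) and, for every s ≥ t₀ and every state y, the coordinate function s ↦ p_y(s) has derivative (p(s) · Λ(s))_y = Σ_x p_x(s)·Λ(s)(x,y) at s. Then p_{(1,0)}(s) = 0 for all s ≥ t₀. -/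
/-!
No state other than `(1,0)` itself feeds `(1,0)`: the `(1,0)`-column of `Λ` vanishes off the
diagonal. Hence `p_{(1,0)}` solves the scalar linear equation `f' = -(a + c) f` with
`f(t₀) = 0`, and the integrating factor `exp ∫ (a + c)` shows that it stays `0`.
-/

open intervalIntegral

theorem eq_mul_exp_integral_of_hasDerivAt_mul {k f : ℝ → ℝ} {t₀ : ℝ} (hk : Continuous k)
    (hf : ∀ u, t₀ ≤ u → HasDerivAt f (k u * f u) u) :
    ∀ s, t₀ ≤ s → f s = f t₀ * Real.exp (∫ t in t₀..s, k t) := by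
  intro s hs
  set A : ℝ → ℝ := fun u => ∫ t in t₀..u, k t
  have hA : ∀ u, HasDerivAt A (k u) u := fun u =>
    (hk.integral_hasStrictDerivAt t₀ u).hasDerivAt
  have hg : ∀ u, t₀ ≤ u → HasDerivAt (fun u => f u * Real.exp (-A u)) 0 u := fun u hu =>
    ((hf u hu).mul (hA u).neg.exp).congr_deriv (by ring)
  have hconst : f s * Real.exp (-A s) = f t₀ * Real.exp (-A t₀) :=
    constant_of_has_deriv_right_zero
      (fun u hu => (hg u hu.1).continuousAt.continuousWithinAt)
      (fun u hu => (hg u hu.1).hasDerivWithinAt) s ⟨hs, le_rfl⟩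
  have hA₀ : A t₀ = 0 := integral_same
  rw [hA₀, neg_zero, Real.exp_zero, mul_one, Real.exp_neg, ← div_eq_mul_inv,
    div_eq_iff (Real.exp_pos _).ne'] at hconst
  exact hconst

theorem systemic_importance_no_lone_default_general (a c d : ℝ → ℝ)
    (ha : Continuous a) (hc : Continuous c)
    (Λ : ℝ → Matrix (Fin 2 × Fin 2) (Fin 2 × Fin 2) ℝ)
    (hΛ : ∀ u : ℝ, Λ u = Matrix.of fun x y =>
      if x = ((0 : Fin 2), (0 : Fin 2)) then
        (if y = ((0 : Fin 2), (0 : Fin 2)) then -(a u + c u)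
        else if y = ((0 : Fin 2), (1 : Fin 2)) then a u
        else if y = ((1 : Fin 2), (0 : Fin 2)) then 0
        else c u)
      else if x = ((0 : Fin 2), (1 : Fin 2)) then
        (if y = ((0 : Fin 2), (1 : Fin 2)) then -(d u)
        else if y = ((1 : Fin 2), (1 : Fin 2)) then d u
        else 0)
      else if x = ((1 : Fin 2), (0 : Fin 2)) then
        (if y = ((1 : Fin 2), (0 : Fin 2)) then -(a u + c u)
        else if y = ((1 : Fin 2), (1 : Fin 2)) then a u + c u
        else 0)
      else 0)
    (t₀ : ℝ)
    (p : ℝ → (Fin 2 × Fin 2) → ℝ)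
    (hp0 : p t₀ = fun x => if x = ((0 : Fin 2), (0 : Fin 2)) then 1 else 0)
    (hode : ∀ s : ℝ, t₀ ≤ s → ∀ y : Fin 2 × Fin 2,
      HasDerivAt (fun u => p u y) (∑ x, p s x * Λ s x y) s) :
    ∀ s : ℝ, t₀ ≤ s → p s ((1 : Fin 2), (0 : Fin 2)) = 0 := by
  set y₁₀ : Fin 2 × Fin 2 := (1, 0)
  have hcol : ∀ u x, x ≠ y₁₀ → Λ u x y₁₀ = 0 := by
    intro u x hx
    fin_cases x <;> simp_all [y₁₀]
  have hdiag : ∀ u, Λ u y₁₀ y₁₀ = -(a u + c u) := by simp [y₁₀, hΛ]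
  have hlin : ∀ u, t₀ ≤ u →
      HasDerivAt (fun u => p u y₁₀) (-(a u + c u) * p u y₁₀) u := by
    intro u hu
    have h := hode u hu y₁₀
    rwa [Fintype.sum_eq_single y₁₀ fun x hx => by rw [hcol u x hx, mul_zero], hdiag,
      mul_comm] at h
  intro s hs
  rw [eq_mul_exp_integral_of_hasDerivAt_mul (ha.add hc).neg hlin s hs, hp0]
  simp [y₁₀]

/-- (Systemic importance, eq. (6.13) of the paper.) For the generator
with rows `(0,0) : (−(a+c), a, 0, c)`, `(0,1) : (0, −d, 0, d)`,
`(1,0) : (0, 0, −(a+c), a+c)`, `(1,1) : 0`, any solution of the Kolmogorov forward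
equation started at time `t₀` from the point mass at `(0,0)` never charges the state
`(1,0)`: the first institution cannot be in default alone. -/
theorem systemic_importance_no_lone_default (a c d : ℝ → ℝ)
    (ha : Continuous a) (hc : Continuous c) (hd : Continuous d)
    (Λ : ℝ → Matrix (Fin 2 × Fin 2) (Fin 2 × Fin 2) ℝ)
    (hΛ : ∀ u : ℝ, Λ u = Matrix.of fun x y =>
      if x = ((0 : Fin 2), (0 : Fin 2)) then
        (if y = ((0 : Fin 2), (0 : Fin 2)) then -(a u + c u)
        else if y = ((0 : Fin 2), (1 : Fin 2)) then a u
        else if y = ((1 : Fin 2), (0 : Fin 2)) then 0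
        else c u)
      else if x = ((0 : Fin 2), (1 : Fin 2)) then
        (if y = ((0 : Fin 2), (1 : Fin 2)) then -(d u)
        else if y = ((1 : Fin 2), (1 : Fin 2)) then d u
        else 0)
      else if x = ((1 : Fin 2), (0 : Fin 2)) then
        (if y = ((1 : Fin 2), (0 : Fin 2)) then -(a u + c u)
        else if y = ((1 : Fin 2), (1 : Fin 2)) then a u + c u
        else 0)
      else 0)
    (t₀ : ℝ) (ht₀ : 0 ≤ t₀)
    (p : ℝ → (Fin 2 × Fin 2) → ℝ)
    (hp0 : p t₀ = fun x => if x = ((0 : Fin 2), (0 : Fin 2)) then 1 else 0)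
    (hode : ∀ s : ℝ, t₀ ≤ s → ∀ y : Fin 2 × Fin 2,
      HasDerivAt (fun u => p u y) (∑ x, p s x * Λ s x y) s) :
    ∀ s : ℝ, t₀ ≤ s → p s ((1 : Fin 2), (0 : Fin 2)) = 0 :=
  systemic_importance_no_lone_default_general a c d ha hc Λ hΛ t₀ p hp0 hode
end

section
/- Let a, c, d : ℝ → ℝ be continuous functions. Index ℝ⁴ by the four states (0,0), (0,1), (1,0), (1,1) and let Λ : ℝ → Matrix (four states) (four states) ℝ have rows: state (0,0): (−(a(u)+c(u)), a(u), 0, c(u)); state (0,1): (0, −d(u), 0, d(u)); state (1,0): (0, 0, −(a(u)+c(u)), a(u)+c(u)); state (1,1): (0, 0, 0, 0). Fix t₀ ≥ 0 and suppose p, q : ℝ → (four states → ℝ) each satisfy the Kolmogorov forward equation (for every s ≥ t₀ and state y, the coordinate s ↦ p_y(s) has derivative (p(s)·Λ(s))_y at s, and similarly for q), with p(t₀) = the indicator of state (0,0) and q(t₀) = the indicator of state (1,0). Then for all s ≥ t₀: p_{(0,1)}(s) + p_{(1,1)}(s) = q_{(0,1)}(s) + q_{(1,1)}(s). -/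
/-!
The states in which the second institution has not defaulted, `(0,0)` and `(1,0)`, are
left at the same total rate `a + c` and never re-entered. Hence for any solution `r` of the
forward equation the mass `r (0,0) + r (1,0)` solves the scalar linear equation
`m' = -(a + c) m`, while the total mass is conserved. For `r = p - q` both quantities start
at `0`, so by uniqueness for scalar linear equations with continuous coefficient they stay
`0`, and so does their difference `r (0,1) + r (1,1)`.
-/

open Finset Real Set

theorem eq_zero_of_hasDerivAt_eq_mul_self {k g : ℝ → ℝ} {t₀ : ℝ} (hk : Continuous k)
    (hg : ∀ s, t₀ ≤ s → HasDerivAt g (k s * g s) s) (hg₀ : g t₀ = 0) {s : ℝ} (hs : t₀ ≤ s) :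
    g s = 0 := by
  set K : ℝ → ℝ := fun s => ∫ u in t₀..s, k u
  have hF : ∀ x, t₀ ≤ x → HasDerivAt (fun u => g u * exp (-K u)) 0 x := fun x hx => by
    have hK : HasDerivAt K (k x) x := (hk.integral_hasStrictDerivAt t₀ x).hasDerivAt
    exact ((hg x hx).mul hK.neg.exp).congr_deriv (by ring)
  have hconst := constant_of_has_deriv_right_zero
    (fun x hx => (hF x hx.1).continuousAt.continuousWithinAt)
    (fun x hx => (hF x hx.1).hasDerivWithinAt) s (right_mem_Icc.2 hs)
  simpa [hg₀, exp_ne_zero] using hconst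

/-- `hS` says that no state outside `S` jumps into `S` and every state of `S` leaves `S` at
the same rate `-k`. -/
theorem hasDerivAt_sum_of_forward {ι : Type*} [Fintype ι] [DecidableEq ι] {r : ℝ → ι → ℝ}
    {Λ : Matrix ι ι ℝ} {S : Finset ι} {k s : ℝ}
    (hr : ∀ y, HasDerivAt (fun u => r u y) (∑ x, r s x * Λ x y) s)
    (hS : ∀ x, ∑ y ∈ S, Λ x y = if x ∈ S then k else 0) :
    HasDerivAt (fun u => ∑ y ∈ S, r u y) (k * ∑ y ∈ S, r s y) s := by
  refine (HasDerivAt.fun_sum fun y _ => hr y).congr_deriv ?_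
  calc ∑ y ∈ S, ∑ x, r s x * Λ x y
      = ∑ x, r s x * if x ∈ S then k else 0 := by
        simp only [← hS, mul_sum]
        exact sum_comm
    _ = k * ∑ y ∈ S, r s y := by
        simp only [mul_ite, mul_zero, sum_ite_mem, Finset.univ_inter, mul_sum, mul_comm]

theorem systemic_importance_second_default_independent_general (a c d : ℝ → ℝ)
    (ha : Continuous a) (hc : Continuous c)
    (Λ : ℝ → Matrix (Fin 2 × Fin 2) (Fin 2 × Fin 2) ℝ)
    (hΛ : ∀ u : ℝ, Λ u = Matrix.of fun x y =>
      if x = ((0 : Fin 2), (0 : Fin 2)) then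
        (if y = ((0 : Fin 2), (0 : Fin 2)) then -(a u + c u)
        else if y = ((0 : Fin 2), (1 : Fin 2)) then a u
        else if y = ((1 : Fin 2), (0 : Fin 2)) then 0
        else c u)
      else if x = ((0 : Fin 2), (1 : Fin 2)) then
        (if y = ((0 : Fin 2), (1 : Fin 2)) then -(d u)
        else if y = ((1 : Fin 2), (1 : Fin 2)) then d u
        else 0)
      else if x = ((1 : Fin 2), (0 : Fin 2)) then
        (if y = ((1 : Fin 2), (0 : Fin 2)) then -(a u + c u)
        else if y = ((1 : Fin 2), (1 : Fin 2)) then a u + c u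
        else 0)
      else 0)
    (t₀ : ℝ)
    (p q : ℝ → (Fin 2 × Fin 2) → ℝ)
    (hp0 : p t₀ = fun x => if x = ((0 : Fin 2), (0 : Fin 2)) then 1 else 0)
    (hq0 : q t₀ = fun x => if x = ((1 : Fin 2), (0 : Fin 2)) then 1 else 0)
    (hpode : ∀ s : ℝ, t₀ ≤ s → ∀ y : Fin 2 × Fin 2,
      HasDerivAt (fun u => p u y) (∑ x, p s x * Λ s x y) s)
    (hqode : ∀ s : ℝ, t₀ ≤ s → ∀ y : Fin 2 × Fin 2,
      HasDerivAt (fun u => q u y) (∑ x, q s x * Λ s x y) s) :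
    ∀ s : ℝ, t₀ ≤ s →
      p s ((0 : Fin 2), (1 : Fin 2)) + p s ((1 : Fin 2), (1 : Fin 2)) =
        q s ((0 : Fin 2), (1 : Fin 2)) + q s ((1 : Fin 2), (1 : Fin 2)) := by
  set r := p - q
  set alive : Finset (Fin 2 × Fin 2) := {(0, 0), (1, 0)}
  have hr : ∀ s, t₀ ≤ s → ∀ y, HasDerivAt (fun u => r u y) (∑ x, r s x * Λ s x y) s :=
    fun s hs y => ((hpode s hs y).fun_sub (hqode s hs y)).congr_deriv (by
      simp [r, sub_mul])
  have halive : ∀ s, t₀ ≤ s → ∑ y ∈ alive, r s y = 0 :=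
    fun s => eq_zero_of_hasDerivAt_eq_mul_self (ha.add hc).neg
      (fun s hs => hasDerivAt_sum_of_forward (hr s hs) fun x => by
        fin_cases x <;> simp [alive, hΛ, Prod.ext_iff])
      (by simp [alive, r, hp0, hq0])
  have htotal : ∀ s, t₀ ≤ s → ∑ y, r s y = 0 :=
    fun s => eq_zero_of_hasDerivAt_eq_mul_self continuous_const
      (fun s hs => hasDerivAt_sum_of_forward (k := 0) (hr s hs) fun x => by
        fin_cases x <;> simp [hΛ, Fintype.sum_prod_type, Fin.sum_univ_two])
      (by simp [r, hp0, hq0])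
  intro s hs
  have hmass := (htotal s hs).trans (halive s hs).symm
  simp [alive, r, Fintype.sum_prod_type, Fin.sum_univ_two] at hmass
  linarith

/-- (Systemic importance, eq. (6.13) of the paper.) For the generator
with rows `(0,0) : (−(a+c), a, 0, c)`, `(0,1) : (0, −d, 0, d)`,
`(1,0) : (0, 0, −(a+c), a+c)`, `(1,1) : 0`, solutions `p` and `q` of the Kolmogorov
forward equation started at time `t₀` from the point masses at `(0,0)` and at `(1,0)`
respectively give the same default probability for the second component:
`p_{(0,1)} + p_{(1,1)} = q_{(0,1)} + q_{(1,1)}`. -/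
theorem systemic_importance_second_default_independent (a c d : ℝ → ℝ)
    (ha : Continuous a) (hc : Continuous c) (hd : Continuous d)
    (Λ : ℝ → Matrix (Fin 2 × Fin 2) (Fin 2 × Fin 2) ℝ)
    (hΛ : ∀ u : ℝ, Λ u = Matrix.of fun x y =>
      if x = ((0 : Fin 2), (0 : Fin 2)) then
        (if y = ((0 : Fin 2), (0 : Fin 2)) then -(a u + c u)
        else if y = ((0 : Fin 2), (1 : Fin 2)) then a u
        else if y = ((1 : Fin 2), (0 : Fin 2)) then 0
        else c u)
      else if x = ((0 : Fin 2), (1 : Fin 2)) then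
        (if y = ((0 : Fin 2), (1 : Fin 2)) then -(d u)
        else if y = ((1 : Fin 2), (1 : Fin 2)) then d u
        else 0)
      else if x = ((1 : Fin 2), (0 : Fin 2)) then
        (if y = ((1 : Fin 2), (0 : Fin 2)) then -(a u + c u)
        else if y = ((1 : Fin 2), (1 : Fin 2)) then a u + c u
        else 0)
      else 0)
    (t₀ : ℝ) (ht₀ : 0 ≤ t₀)
    (p q : ℝ → (Fin 2 × Fin 2) → ℝ)
    (hp0 : p t₀ = fun x => if x = ((0 : Fin 2), (0 : Fin 2)) then 1 else 0)
    (hq0 : q t₀ = fun x => if x = ((1 : Fin 2), (0 : Fin 2)) then 1 else 0)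
    (hpode : ∀ s : ℝ, t₀ ≤ s → ∀ y : Fin 2 × Fin 2,
      HasDerivAt (fun u => p u y) (∑ x, p s x * Λ s x y) s)
    (hqode : ∀ s : ℝ, t₀ ≤ s → ∀ y : Fin 2 × Fin 2,
      HasDerivAt (fun u => q u y) (∑ x, q s x * Λ s x y) s) :
    ∀ s : ℝ, t₀ ≤ s →
      p s ((0 : Fin 2), (1 : Fin 2)) + p s ((1 : Fin 2), (1 : Fin 2)) =
        q s ((0 : Fin 2), (1 : Fin 2)) + q s ((1 : Fin 2), (1 : Fin 2)) :=
  systemic_importance_second_default_independent_general a c d ha hc Λ hΛ t₀ p q hp0 hq0 hpode hqode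
end
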